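/- arXiv:2006.10557 — 3 statements merged into one kernel-verified Lean document; each statement's English description precedes it below -/
import Mathlib

section
/- Let H be a real inner product space, W ∈ H with ‖W‖ < 1, and y ∈ H with y ≠ 0. Set λ := 1 − ‖W‖² and W₀ := ⟨W, y⟩. Then F := (√(λ‖y‖² + W₀²) − W₀)/λ is positive and satisfies ‖y/F − W‖ = 1. -/
open scoped RealInnerProductSpace

theorem randers_solves_navigation {H : Type*} [NormedAddCommGroup H]
    [InnerProductSpace ℝ H] (W y : H) (hW : ‖W‖ < 1) (hy : y ≠ 0) :
    0 < (Real.sqrt ((1 - ‖W‖ ^ 2) * ‖y‖ ^ 2 + ⟪W, y⟫ ^ 2) - ⟪W, y⟫) / (1 - ‖W‖ ^ 2) ∧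
      ‖((Real.sqrt ((1 - ‖W‖ ^ 2) * ‖y‖ ^ 2 + ⟪W, y⟫ ^ 2) - ⟪W, y⟫) / (1 - ‖W‖ ^ 2))⁻¹ • y
          - W‖ = 1 := by
  have hW0 : (0:ℝ) ≤ ‖W‖ := norm_nonneg W
  have hlam : 0 < 1 - ‖W‖ ^ 2 := by nlinarith
  have hh : 0 < ‖y‖ := norm_pos_iff.mpr hy
  set lam := 1 - ‖W‖ ^ 2 with hlamdef
  set w0 := ⟪W, y⟫ with hw0
  have harg : 0 ≤ lam * ‖y‖ ^ 2 + w0 ^ 2 := by positivity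
  set s := Real.sqrt (lam * ‖y‖ ^ 2 + w0 ^ 2) with hs
  have hs2 : s ^ 2 = lam * ‖y‖ ^ 2 + w0 ^ 2 := Real.sq_sqrt harg
  have hsgt : w0 < s := by
    have h1 : Real.sqrt (w0 ^ 2) < s := by
      apply Real.sqrt_lt_sqrt (sq_nonneg _)
      nlinarith [mul_pos hlam (pow_pos hh 2)]
    rw [Real.sqrt_sq_eq_abs] at h1
    calc w0 ≤ |w0| := le_abs_self _
      _ < s := h1
  have hF : 0 < (s - w0) / lam := div_pos (by linarith) hlam
  refine ⟨hF, ?_⟩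
  set F := (s - w0) / lam with hFdef
  have hFne : F ≠ 0 := ne_of_gt hF
  have key : lam * F ^ 2 + 2 * w0 * F = ‖y‖ ^ 2 := by
    rw [hFdef]
    field_simp
    nlinarith [hs2]
  have hnorm2 : ‖F⁻¹ • y - W‖ ^ 2 = 1 := by
    rw [norm_sub_sq_real, norm_smul, inner_smul_left]
    simp only [RCLike.conj_to_real, Real.norm_eq_abs, abs_of_pos (inv_pos.mpr hF), real_inner_comm y W, ← hw0]
    field_simp
    nlinarith [key, hF, mul_pos (mul_pos hF hF) hF, real_inner_comm y W, hw0]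
  rw [← Real.sqrt_one, ← hnorm2, Real.sqrt_sq (norm_nonneg _)]
end

section
/- Let H be a real inner product space, W ∈ H with ‖W‖ = 1, and y₁, y₂ ∈ H with ⟨y₁, W⟩ > 0 and ⟨y₂, W⟩ > 0. Then the Kropina metric F(z) = ‖z‖²/(2⟨z, W⟩) satisfies the triangle inequality F(y₁ + y₂) ≤ F(y₁) + F(y₂). -/
/-! The numerator is subadditive by the triangle inequality for the norm and the denominator
is additive, so the claim reduces to Sedrakyan's inequality
`(p + q)² / (a + b) ≤ p² / a + q² / b` for `a, b > 0`. -/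

open scoped RealInnerProductSpace

theorem add_sq_div_add_le {R : Type*} [Field R] [LinearOrder R] [IsStrictOrderedRing R]
    (p q : R) {a b : R} (ha : 0 < a) (hb : 0 < b) :
    (p + q) ^ 2 / (a + b) ≤ p ^ 2 / a + q ^ 2 / b := by
  simpa only [Fin.sum_univ_two, Matrix.cons_val_zero, Matrix.cons_val_one] using
    Finset.sq_sum_div_le_sum_sq_div Finset.univ ![p, q] (g := ![a, b])
      (by simp [Fin.forall_fin_two, ha, hb])

theorem kropina_triangle_inequality_general {H : Type*} [NormedAddCommGroup H]
    [InnerProductSpace ℝ H] (W y₁ y₂ : H)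
    (h₁ : 0 < ⟪y₁, W⟫) (h₂ : 0 < ⟪y₂, W⟫) :
    ‖y₁ + y₂‖ ^ 2 / (2 * ⟪y₁ + y₂, W⟫) ≤
      ‖y₁‖ ^ 2 / (2 * ⟪y₁, W⟫) + ‖y₂‖ ^ 2 / (2 * ⟪y₂, W⟫) := by
  rw [inner_add_left, mul_add]
  calc ‖y₁ + y₂‖ ^ 2 / (2 * ⟪y₁, W⟫ + 2 * ⟪y₂, W⟫)
      ≤ (‖y₁‖ + ‖y₂‖) ^ 2 / (2 * ⟪y₁, W⟫ + 2 * ⟪y₂, W⟫) := by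
        gcongr
        exact norm_add_le y₁ y₂
    _ ≤ ‖y₁‖ ^ 2 / (2 * ⟪y₁, W⟫) + ‖y₂‖ ^ 2 / (2 * ⟪y₂, W⟫) :=
        add_sq_div_add_le _ _ (by positivity) (by positivity)

theorem kropina_triangle_inequality {H : Type*} [NormedAddCommGroup H]
    [InnerProductSpace ℝ H] (W y₁ y₂ : H) (hW : ‖W‖ = 1)
    (h₁ : 0 < ⟪y₁, W⟫) (h₂ : 0 < ⟪y₂, W⟫) :
    ‖y₁ + y₂‖ ^ 2 / (2 * ⟪y₁ + y₂, W⟫) ≤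
      ‖y₁‖ ^ 2 / (2 * ⟪y₁, W⟫) + ‖y₂‖ ^ 2 / (2 * ⟪y₂, W⟫) :=
  kropina_triangle_inequality_general W y₁ y₂ h₁ h₂
end

section
/- Let H be a real inner product space, W ∈ H with ‖W‖ < 1, λ := 1 − ‖W‖². Define, for y ∈ H, α(y) := √(λ‖y‖² + ⟨W,y⟩²)/λ and β(y) := −⟨W,y⟩/λ. Then α is the norm associated to the inner product a(y,z) := (λ⟨y,z⟩ + ⟨W,y⟩⟨W,z⟩)/λ², the linear functional β satisfies ‖β‖_α² = ‖W‖² < 1 (i.e. sup over α(y) = 1 of β(y) equals ‖W‖), and the navigation solution F(y) = (√(λ‖y‖² + ⟨W,y⟩²) − ⟨W,y⟩)/λ equals α(y) + β(y). -/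
/-!
Everything is elementary algebra in the two quantities `‖y‖` and `t = ⟪W, y⟫`, with `λ + ‖W‖² = 1`.
The only real content is the bound on `β`: on the `α`-sphere `λ‖y‖² + t² = λ²`, Cauchy–Schwarz
`t² ≤ ‖W‖²‖y‖²` gives `t² ≤ ‖W‖²(λ‖y‖² + t²) = (‖W‖λ)²`, so `β y = -t/λ ≤ ‖W‖`; equality holds at
`y = λu` for a unit vector `u` pointing against `W`.
-/

open scoped RealInnerProductSpace

namespace Zermelo

variable {H : Type*} [NormedAddCommGroup H] [InnerProductSpace ℝ H]

noncomputable def randersForm (W : H) (lam : ℝ) (y z : H) : ℝ :=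
  (lam * ⟪y, z⟫ + ⟪W, y⟫ * ⟪W, z⟫) / lam ^ 2

section randersForm

variable (W : H) (lam : ℝ)

theorem randersForm_comm (y z : H) : randersForm W lam y z = randersForm W lam z y := by
  simp only [randersForm, real_inner_comm z y]
  ring

theorem randersForm_smul_add_left (c : ℝ) (y y' z : H) :
    randersForm W lam (c • y + y') z = c * randersForm W lam y z + randersForm W lam y' z := by
  simp only [randersForm, inner_add_left, inner_add_right, real_inner_smul_left,
    real_inner_smul_right]
  ring

theorem randersForm_self (y : H) :
    randersForm W lam y y = (lam * ‖y‖ ^ 2 + ⟪W, y⟫ ^ 2) / lam ^ 2 := by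
  rw [randersForm, real_inner_self_eq_norm_sq, sq ⟪W, y⟫]

variable {W lam}

theorem randersForm_self_pos (hlam : 0 < lam) {y : H} (hy : y ≠ 0) :
    0 < randersForm W lam y y := by
  have : 0 < ‖y‖ := norm_pos_iff.2 hy
  rw [randersForm_self]
  positivity

theorem sqrt_randersForm_self (hlam : 0 < lam) (y : H) :
    √(randersForm W lam y y) = √(lam * ‖y‖ ^ 2 + ⟪W, y⟫ ^ 2) / lam := by
  rw [randersForm_self, Real.sqrt_div' _ (sq_nonneg lam), Real.sqrt_sq hlam.le]

end randersForm

section dualNorm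

variable {W : H} {lam : ℝ}

theorem inner_sq_le_sq_norm_mul (hlam : 0 ≤ lam) (hsum : lam + ‖W‖ ^ 2 = 1) (y : H) :
    ⟪W, y⟫ ^ 2 ≤ ‖W‖ ^ 2 * (lam * ‖y‖ ^ 2 + ⟪W, y⟫ ^ 2) := by
  have hCS : ⟪W, y⟫ ^ 2 ≤ ‖W‖ ^ 2 * ‖y‖ ^ 2 := by
    rw [← mul_pow]
    exact sq_le_sq' (neg_le_of_abs_le (abs_real_inner_le_norm W y)) (real_inner_le_norm W y)
  linear_combination mul_le_mul_of_nonneg_left hCS hlam - ⟪W, y⟫ ^ 2 * hsum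

theorem neg_inner_le_of_eq_sq (hlam : 0 ≤ lam) (hsum : lam + ‖W‖ ^ 2 = 1) {y : H}
    (hy : lam * ‖y‖ ^ 2 + ⟪W, y⟫ ^ 2 = lam ^ 2) : -⟪W, y⟫ ≤ ‖W‖ * lam := by
  have h := inner_sq_le_sq_norm_mul hlam hsum y
  rw [hy, ← mul_pow] at h
  exact neg_le.1 (abs_le_of_sq_le_sq' h (by positivity)).1

theorem exists_norm_eq_one_inner_eq_neg_norm [Nontrivial H] (W : H) :
    ∃ u : H, ‖u‖ = 1 ∧ ⟪W, u⟫ = -‖W‖ := by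
  rcases eq_or_ne W 0 with rfl | hW
  · obtain ⟨u, hu⟩ := exists_norm_eq H zero_le_one
    exact ⟨u, hu, by simp⟩
  · refine ⟨-‖W‖⁻¹ • W, ?_, ?_⟩
    · rw [norm_smul, norm_neg, norm_inv, norm_norm, inv_mul_cancel₀ (norm_ne_zero_iff.2 hW)]
    · rw [real_inner_smul_right, real_inner_self_eq_norm_sq]
      field_simp

theorem isGreatest_neg_inner_div [Nontrivial H] (hlam : 0 < lam) (hsum : lam + ‖W‖ ^ 2 = 1) :
    IsGreatest {r : ℝ | ∃ y : H, √(lam * ‖y‖ ^ 2 + ⟪W, y⟫ ^ 2) / lam = 1 ∧ -⟪W, y⟫ / lam = r}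
      ‖W‖ := by
  have sphere_iff (y : H) : √(lam * ‖y‖ ^ 2 + ⟪W, y⟫ ^ 2) / lam = 1 ↔
      lam * ‖y‖ ^ 2 + ⟪W, y⟫ ^ 2 = lam ^ 2 := by
    rw [div_eq_one_iff_eq hlam.ne', Real.sqrt_eq_iff_eq_sq (by positivity) hlam.le]
  refine ⟨?_, ?_⟩
  · obtain ⟨u, hu, hWu⟩ := exists_norm_eq_one_inner_eq_neg_norm W
    refine ⟨lam • u, (sphere_iff _).2 ?_, ?_⟩
    · rw [norm_smul, real_inner_smul_right, hu, hWu, Real.norm_of_nonneg hlam.le]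
      linear_combination lam ^ 2 * hsum
    · rw [real_inner_smul_right, hWu]
      field_simp
  · rintro r ⟨y, hα, rfl⟩
    rw [div_le_iff₀ hlam]
    exact neg_inner_le_of_eq_sq hlam.le hsum ((sphere_iff y).1 hα)

end dualNorm

end Zermelo

open Zermelo in
theorem navigation_solution_is_randers {H : Type*} [NormedAddCommGroup H]
    [InnerProductSpace ℝ H] [Nontrivial H] (W : H) (hW : ‖W‖ < 1) :
    let lam : ℝ := 1 - ‖W‖ ^ 2
    let α : H → ℝ := fun y => Real.sqrt (lam * ‖y‖ ^ 2 + ⟪W, y⟫ ^ 2) / lam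
    let β : H → ℝ := fun y => -⟪W, y⟫ / lam
    let a : H → H → ℝ := fun y z => (lam * ⟪y, z⟫ + ⟪W, y⟫ * ⟪W, z⟫) / lam ^ 2
    -- `a` is a symmetric positive definite bilinear form and `α` its norm
    (∀ y z, a y z = a z y) ∧
    (∀ (c : ℝ) (y y' z : H), a (c • y + y') z = c * a y z + a y' z) ∧
    (∀ y, y ≠ 0 → 0 < a y y) ∧
    (∀ y, α y = Real.sqrt (a y y)) ∧
    -- `β` is linear with `‖β‖_α = ‖W‖ < 1`
    (∀ (c : ℝ) (y y' : H), β (c • y + y') = c * β y + β y') ∧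
    IsGreatest {r : ℝ | ∃ y, α y = 1 ∧ β y = r} ‖W‖ ∧
    -- the navigation solution equals `α + β`
    (∀ y, (Real.sqrt (lam * ‖y‖ ^ 2 + ⟪W, y⟫ ^ 2) - ⟪W, y⟫) / lam = α y + β y) := by
  intro lam α β a
  have hlam : 0 < lam := sub_pos.2 (pow_lt_one₀ (norm_nonneg W) hW two_ne_zero)
  have hsum : lam + ‖W‖ ^ 2 = 1 := sub_add_cancel 1 _
  refine ⟨randersForm_comm W lam, randersForm_smul_add_left W lam,
    fun y => randersForm_self_pos hlam, fun y => (sqrt_randersForm_self hlam y).symm, ?_,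
    isGreatest_neg_inner_div hlam hsum, fun y => by rw [sub_eq_add_neg, add_div]⟩
  intro c y y'
  simp only [β, inner_add_right, real_inner_smul_right]
  ring
end
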